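/- If κ is η-reflecting for all η < γ and A ⊆ κ is γ'-club in κ with γ' < γ, then A is γ-club in κ. -/

import Mathlib

open Set

namespace GenStat

/-- `S` is unbounded in (below) `κ`. -/
def Unbdd (S : Set Ordinal) (κ : Ordinal) : Prop :=
  ∀ β < κ, ∃ α ∈ S, β ≤ α ∧ α < κ

/-- `Stat γ S κ` : `S` is `γ`-stationary in `κ`.  Defined by recursion on `γ`:
`S` is `0`-stationary iff unbounded; `S` is `γ`-stationary iff for every `η < γ`,
`κ` is `η`-reflecting and `S` meets every `η`-club of `κ`. -/
def Stat (γ : Ordinal) (S : Set Ordinal) (κ : Ordinal) : Prop :=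
  (γ = 0 → Unbdd S κ) ∧
  ∀ η < γ,
    (∀ A B : Set Ordinal, A ⊆ Set.Iio κ → B ⊆ Set.Iio κ →
        Stat η A κ → Stat η B κ →
        ∃ α < κ, Stat η (A ∩ Set.Iio α) α ∧ Stat η (B ∩ Set.Iio α) α)
    ∧ (∀ C : Set Ordinal, C ⊆ Set.Iio κ → Stat η C κ →
        (∀ α < κ, Stat η (C ∩ Set.Iio α) α → α ∈ C) →
        (S ∩ C).Nonempty)
termination_by γ

/-- `κ` is `γ`-reflecting: any two `γ`-stationary subsets of `κ` are simultaneously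
`γ`-stationary below some `α < κ`. -/
def Reflecting (γ κ : Ordinal) : Prop :=
  ∀ A B : Set Ordinal, A ⊆ Set.Iio κ → B ⊆ Set.Iio κ →
    Stat γ A κ → Stat γ B κ →
    ∃ α < κ, Stat γ (A ∩ Set.Iio α) α ∧ Stat γ (B ∩ Set.Iio α) α

/-- `C` is `γ`-club in `κ`: `γ`-stationary in `κ` and `γ`-stationary-closed below `κ`. -/
def IsClub (γ : Ordinal) (C : Set Ordinal) (κ : Ordinal) : Prop :=
  C ⊆ Set.Iio κ ∧ Stat γ C κ ∧ ∀ α < κ, Stat γ (C ∩ Set.Iio α) α → α ∈ C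

/-- `d_γ(A)` relative to `κ` : the set of `α < κ` below which `A` is `γ`-stationary. -/
def dSet (γ : Ordinal) (A : Set Ordinal) (κ : Ordinal) : Set Ordinal :=
  {α | α < κ ∧ Stat γ (A ∩ Set.Iio α) α}

/-! Below `γ'` the `η`-clubs are met because `A` is `γ'`-stationary; at `η = γ'` two `γ'`-clubs
meet by reflecting both to a common `α`, which closure puts into each; above `γ'` an
`η`-stationary club meets the `γ'`-club `A`. Closure transfers because `γ`-stationarity implies
`γ'`-stationarity for `γ' ≠ 0`, while a `0`-club is all of `κ`. -/

theorem stat_iff {γ κ : Ordinal} {S : Set Ordinal} :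
    Stat γ S κ ↔ (γ = 0 → Unbdd S κ) ∧
      ∀ η < γ, Reflecting η κ ∧ ∀ C, IsClub η C κ → (S ∩ C).Nonempty := by
  rw [Stat]
  refine and_congr_right fun _ => forall₂_congr fun η _ => and_congr_right fun _ => ?_
  exact ⟨fun hS C ⟨hC, hCs, hCc⟩ => hS C hC hCs hCc, fun hS C hC hCs hCc => hS C ⟨hC, hCs, hCc⟩⟩

theorem stat_zero_iff {κ : Ordinal} {S : Set Ordinal} : Stat 0 S κ ↔ Unbdd S κ := by
  simp [stat_iff]

theorem Stat.inter_nonempty {γ η κ : Ordinal} {S C : Set Ordinal} (hS : Stat γ S κ)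
    (hη : η < γ) (hC : IsClub η C κ) : (S ∩ C).Nonempty :=
  ((stat_iff.1 hS).2 η hη).2 C hC

theorem Stat.anti {γ η κ : Ordinal} {S : Set Ordinal} (hS : Stat γ S κ) (hη₀ : η ≠ 0)
    (hηγ : η ≤ γ) : Stat η S κ :=
  stat_iff.2 ⟨fun h => absurd h hη₀, fun ζ hζ => (stat_iff.1 hS).2 ζ (hζ.trans_le hηγ)⟩

theorem IsClub.inter_nonempty {η κ : Ordinal} {A C : Set Ordinal} (hrefl : Reflecting η κ)
    (hA : IsClub η A κ) (hC : IsClub η C κ) : (A ∩ C).Nonempty := by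
  obtain ⟨α, hακ, hAα, hCα⟩ := hrefl A C hA.1 hC.1 hA.2.1 hC.2.1
  exact ⟨α, hA.2.2 α hακ hAα, hC.2.2 α hακ hCα⟩

-- Once `Iio β ⊆ A`, the set `A ∩ Iio β` is unbounded in `β`, so closure puts `β` into `A`.
theorem IsClub.Iio_subset_of_zero {κ : Ordinal} {A : Set Ordinal} (hA : IsClub 0 A κ) :
    Iio κ ⊆ A := by
  intro β
  induction β using WellFoundedLT.induction with
  | _ β ih =>
    intro hβ
    refine hA.2.2 β hβ (stat_zero_iff.2 fun b hb => ⟨b, ⟨?_, hb⟩, le_rfl, hb⟩)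
    exact ih b hb (hb.trans hβ)

theorem IsClub.stat_of_lt {γ γ' κ : Ordinal} {A : Set Ordinal}
    (hrefl : ∀ η < γ, Reflecting η κ) (h : γ' < γ) (hA : IsClub γ' A κ) : Stat γ A κ := by
  refine stat_iff.2 ⟨fun h0 => absurd (h0 ▸ h) (not_lt_zero (a := γ')),
    fun η hη => ⟨hrefl η hη, fun C hC => ?_⟩⟩
  rcases lt_trichotomy η γ' with hlt | rfl | hgt
  · exact hA.2.1.inter_nonempty hlt hC
  · exact hA.inter_nonempty (hrefl η hη) hC
  · exact inter_comm A C ▸ hC.2.1.inter_nonempty hgt hA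

theorem IsClub.closed_of_le {γ γ' κ : Ordinal} {A : Set Ordinal} (h : γ' ≤ γ)
    (hA : IsClub γ' A κ) : ∀ α < κ, Stat γ (A ∩ Iio α) α → α ∈ A := by
  intro α hα hst
  by_cases hγ' : γ' = 0
  · exact (hγ' ▸ hA).Iio_subset_of_zero hα
  · exact hA.2.2 α hα (hst.anti hγ' h)

/-- If `κ` is `η`-reflecting for all `η < γ` and `A` is `γ'`-club in `κ`
with `γ' < γ`, then `A` is `γ`-club in `κ`. -/
theorem club_mono (κ γ γ' : Ordinal) (A : Set Ordinal)
    (hrefl : ∀ η < γ, Reflecting η κ) (h : γ' < γ) (hA : IsClub γ' A κ) :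
    IsClub γ A κ :=
  ⟨hA.1, hA.stat_of_lt hrefl h, hA.closed_of_le h.le⟩

end GenStat
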